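/- Suppose the amplitude A = σ·U with U a nonnegative random variable, the phase θ is uniform on (−π, π] and independent of A, the amplitude quantizer satisfies the centroid condition with normalized distortion C = E[(U − Q(U))²] and E[U²] = 2, and the phase quantizer produces wrapped phase error δ uniform on [−h, h] (h = π/N_p) independent of A and Q(U). Then the expected squared pair error is E|z − ẑ|² = σ²·[C + 2·(2 − C)·(1 − sin(h)/h)], where z = A·e^{iθ} and ẑ = σ·Q(U)·e^{i(θ−δ)}. -/

import Mathlib

/-! Pointwise, `|z - ẑ|² = σ²[(U - V)² + 2UV(1 - cos δ)]`, so the phase `θ` drops out. Since `δ` is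
independent of `(U, V)`, the second term has mean `2E[UV](1 - E[cos δ])` with
`E[cos δ] = sin h / h`. The centroid condition `V = E[U | V]` gives `E[UV] = E[V²]`, hence
`C = E[U²] - 2E[UV] + E[V²] = 2 - E[UV]`. -/

open MeasureTheory ProbabilityTheory Real

lemma norm_sq_ofReal_mul_exp_sub (a b t d : ℝ) :
    ‖(a : ℂ) * Complex.exp (t * Complex.I) - (b : ℂ) * Complex.exp ((t - d) * Complex.I)‖ ^ 2 =
      (a - b) ^ 2 + 2 * (a * b) * (1 - Real.cos d) := by
  have hfactor : (a : ℂ) * Complex.exp (t * Complex.I) - b * Complex.exp ((t - d) * Complex.I) =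
      Complex.exp (t * Complex.I) * (a - b * Complex.exp ((-d : ℝ) * Complex.I)) := by
    rw [show ((t : ℂ) - d) * Complex.I = t * Complex.I + (-d : ℝ) * Complex.I by push_cast; ring,
      Complex.exp_add]
    ring
  rw [hfactor, norm_mul, Complex.norm_exp_ofReal_mul_I, one_mul, Complex.sq_norm,
    Complex.normSq_apply]
  simp only [Complex.sub_re, Complex.sub_im, Complex.mul_re, Complex.mul_im, Complex.ofReal_re,
    Complex.ofReal_im, Complex.exp_ofReal_mul_I_re, Complex.exp_ofReal_mul_I_im, Real.cos_neg,
    Real.sin_neg]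
  linear_combination b ^ 2 * Real.sin_sq_add_cos_sq d

lemma integral_cos_of_map_eq_uniformIcc {Ω : Type*} [MeasurableSpace Ω] {μ : Measure Ω}
    {δ : Ω → ℝ} {h : ℝ} (hδ : AEMeasurable δ μ) (hh : 0 < h)
    (hlaw : μ.map δ = (ENNReal.ofReal (2 * h))⁻¹ • volume.restrict (Set.Icc (-h) h)) :
    ∫ ω, Real.cos (δ ω) ∂μ = Real.sin h / h := by
  rw [← integral_map hδ Real.continuous_cos.aestronglyMeasurable, hlaw, integral_smul_measure,
    ENNReal.toReal_inv, ENNReal.toReal_ofReal (by positivity), integral_Icc_eq_integral_Ioc,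
    ← intervalIntegral.integral_of_le (by linarith), integral_cos, Real.sin_neg, smul_eq_mul]
  field_simp
  ring

lemma integrable_cos_comp {Ω : Type*} [MeasurableSpace Ω] {μ : Measure Ω}
    [IsFiniteMeasure μ] {δ : Ω → ℝ} (hδ : AEMeasurable δ μ) :
    Integrable (fun ω => Real.cos (δ ω)) μ :=
  (integrable_const 1).mono'
    (continuous_cos.comp_aestronglyMeasurable hδ.aestronglyMeasurable)
    (ae_of_all _ fun _ => abs_cos_le_one _)

lemma integral_mul_one_sub_cos_of_indepFun {Ω : Type*} [MeasurableSpace Ω] {μ : Measure Ω}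
    [IsProbabilityMeasure μ] {X δ : Ω → ℝ} {h : ℝ} (hh : 0 < h) (hX : Integrable X μ)
    (hδ : AEMeasurable δ μ)
    (hlaw : μ.map δ = (ENNReal.ofReal (2 * h))⁻¹ • volume.restrict (Set.Icc (-h) h))
    (hindep : IndepFun X δ μ) :
    ∫ ω, X ω * (1 - Real.cos (δ ω)) ∂μ = (∫ ω, X ω ∂μ) * (1 - Real.sin h / h) := by
  have hindep' : IndepFun X (fun ω => 1 - Real.cos (δ ω)) μ :=
    hindep.comp measurable_id (continuous_const.sub continuous_cos).measurable
  have hcos : Integrable (fun ω => 1 - Real.cos (δ ω)) μ :=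
    (integrable_const 1).sub (integrable_cos_comp hδ)
  rw [hindep'.integral_fun_mul_eq_mul_integral hX.aestronglyMeasurable hcos.aestronglyMeasurable,
    integral_sub (integrable_const 1) (integrable_cos_comp hδ),
    integral_cos_of_map_eq_uniformIcc hδ hh hlaw]
  simp

lemma integral_norm_sq_polar_error {Ω : Type*} [MeasurableSpace Ω] {μ : Measure Ω}
    [IsProbabilityMeasure μ] (σ : ℝ) {h : ℝ} (hh : 0 < h) {U V θ δ : Ω → ℝ}
    (hU : MemLp U 2 μ) (hV : MemLp V 2 μ) (hδ : AEMeasurable δ μ)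
    (hlaw : μ.map δ = (ENNReal.ofReal (2 * h))⁻¹ • volume.restrict (Set.Icc (-h) h))
    (hindep : IndepFun δ (fun ω => (U ω, V ω)) μ) :
    ∫ ω, ‖(σ * U ω : ℂ) * Complex.exp (θ ω * Complex.I) -
        (σ * V ω : ℂ) * Complex.exp ((θ ω - δ ω) * Complex.I)‖ ^ 2 ∂μ =
      σ ^ 2 * (∫ ω, (U ω - V ω) ^ 2 ∂μ +
        2 * (∫ ω, U ω * V ω ∂μ) * (1 - Real.sin h / h)) := by
  have hUV : Integrable (fun ω => U ω * V ω) μ := hU.integrable_mul hV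
  have hindep' : IndepFun (fun ω => U ω * V ω) δ μ :=
    (hindep.comp measurable_id (measurable_fst.mul measurable_snd)).symm
  have hdist : Integrable (fun ω => (U ω - V ω) ^ 2) μ := (hU.sub hV).integrable_sq
  have hphase : Integrable (fun ω => 2 * (U ω * V ω * (1 - Real.cos (δ ω)))) μ :=
    ((hindep'.comp measurable_id (continuous_const.sub continuous_cos).measurable).integrable_mul
      hUV ((integrable_const 1).sub (integrable_cos_comp hδ))).const_mul 2
  calc ∫ ω, ‖(σ * U ω : ℂ) * Complex.exp (θ ω * Complex.I) -
        (σ * V ω : ℂ) * Complex.exp ((θ ω - δ ω) * Complex.I)‖ ^ 2 ∂μ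
      = ∫ ω, σ ^ 2 * ((U ω - V ω) ^ 2 + 2 * (U ω * V ω * (1 - Real.cos (δ ω)))) ∂μ := by
        refine integral_congr_ae (ae_of_all _ fun ω => ?_)
        simp only [← Complex.ofReal_mul, norm_sq_ofReal_mul_exp_sub]
        ring
    _ = _ := by
        rw [integral_const_mul, integral_add hdist hphase, integral_const_mul,
          integral_mul_one_sub_cos_of_indepFun hh hUV hδ hlaw hindep']
        ring

lemma integral_mul_eq_integral_sq_sub_of_ae_eq_condExp {Ω : Type*} {m m₀ : MeasurableSpace Ω}
    {μ : Measure Ω} [IsFiniteMeasure μ] {U V : Ω → ℝ} (hm : m ≤ m₀)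
    (hVm : StronglyMeasurable[m] V) (hU : MemLp U 2 μ) (hV : MemLp V 2 μ)
    (hcentroid : V =ᵐ[μ] μ[U | m]) :
    ∫ ω, U ω * V ω ∂μ = ∫ ω, U ω ^ 2 ∂μ - ∫ ω, (U ω - V ω) ^ 2 ∂μ := by
  have hUV : Integrable (fun ω => U ω * V ω) μ := hU.integrable_mul hV
  have hVU : Integrable (fun ω => V ω * U ω) μ := hV.integrable_mul hU
  have hUV_eq_V2 : ∫ ω, U ω * V ω ∂μ = ∫ ω, V ω ^ 2 ∂μ := calc
    ∫ ω, U ω * V ω ∂μ = ∫ ω, μ[fun ω => V ω * U ω | m] ω ∂μ := by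
      rw [integral_condExp hm]; simp_rw [mul_comm]
    _ = ∫ ω, V ω * μ[U | m] ω ∂μ :=
      integral_congr_ae (condExp_mul_of_stronglyMeasurable_left hVm hVU (hU.integrable one_le_two))
    _ = ∫ ω, V ω ^ 2 ∂μ := integral_congr_ae <| hcentroid.mono fun ω hω => by
      dsimp only; rw [sq, ← hω]
  have hexpand : ∫ ω, (U ω - V ω) ^ 2 ∂μ =
      ∫ ω, U ω ^ 2 ∂μ - 2 * ∫ ω, U ω * V ω ∂μ + ∫ ω, V ω ^ 2 ∂μ := by
    have hsq : (fun ω => (U ω - V ω) ^ 2) = fun ω => U ω ^ 2 - 2 * (U ω * V ω) + V ω ^ 2 := by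
      ext ω; ring
    have hdiff : Integrable (fun ω => U ω ^ 2 - 2 * (U ω * V ω)) μ :=
      hU.integrable_sq.sub (hUV.const_mul 2)
    rw [hsq, integral_add hdiff hV.integrable_sq,
      integral_sub hU.integrable_sq (hUV.const_mul 2), integral_const_mul]
  linarith

theorem rayleigh_lloyd_polar_distortion_general
    {Ω : Type*} [MeasureSpace Ω] [IsProbabilityMeasure (volume : Measure Ω)]
    (σ h : ℝ) (Np : ℕ) (hNp : 0 < Np) (hh : h = π / Np)
    (U V θ δ : Ω → ℝ)
    (hU : Measurable U) (hV : Measurable V)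
    (hδ : Measurable δ)
    (hUint : Integrable (fun ω => (U ω) ^ 2))
    (hU2 : (∫ ω, (U ω) ^ 2) = 2)
    (hVfin : (Set.range V).Finite)
    (hcentroid : V =ᵐ[volume]
      (volume : Measure Ω)[U | MeasurableSpace.comap V inferInstance])
    (hδlaw : Measure.map δ (volume : Measure Ω) =
      (ENNReal.ofReal (2 * h))⁻¹ • volume.restrict (Set.Icc (-h) h))
    (hδindep : IndepFun δ (fun ω => (U ω, V ω)))
    (C : ℝ) (hC : C = ∫ ω, (U ω - V ω) ^ 2) :
    (∫ ω, ‖(σ * U ω : ℂ) * Complex.exp (θ ω * Complex.I) -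
        (σ * V ω : ℂ) * Complex.exp ((θ ω - δ ω) * Complex.I)‖ ^ 2) =
      σ ^ 2 * (C + 2 * (2 - C) * (1 - Real.sin h / h)) := by
  have hpos : 0 < h := hh ▸ div_pos pi_pos (Nat.cast_pos.2 hNp)
  obtain ⟨M, hM⟩ := isBounded_iff_forall_norm_le.1 hVfin.isBounded
  have hUL2 : MemLp U 2 := (memLp_two_iff_integrable_sq hU.aestronglyMeasurable).2 hUint
  have hVL2 : MemLp V 2 :=
    MemLp.of_bound hV.aestronglyMeasurable M (ae_of_all _ fun ω => hM _ ⟨ω, rfl⟩)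
  have hEUV : ∫ ω, U ω * V ω = 2 - C := by
    rw [integral_mul_eq_integral_sq_sub_of_ae_eq_condExp hV.comap_le
      (Measurable.of_comap_le le_rfl).stronglyMeasurable hUL2 hVL2 hcentroid, hU2, hC]
  rw [integral_norm_sq_polar_error σ hpos hUL2 hVL2 hδ.aemeasurable hδlaw hδindep, ← hC, hEUV]

/-- Rayleigh–Lloyd polar distortion: with amplitude `A = σ·U`, phase `θ` uniform
on `(-π, π]` independent of the amplitude, a centroid amplitude quantizer
`V = Q(U)` with normalized distortion `C = E[(U - Q(U))²]` and `E[U²] = 2`, and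
wrapped phase error `δ` uniform on `[-h, h]` (`h = π / N_p`) independent of
`(U, Q(U))`, the expected squared pair error of `z = A e^{iθ}` against
`ẑ = σ Q(U) e^{i(θ - δ)}` equals `σ²·[C + 2(2 - C)(1 - sin h / h)]`. -/
theorem rayleigh_lloyd_polar_distortion
    {Ω : Type*} [MeasureSpace Ω] [IsProbabilityMeasure (volume : Measure Ω)]
    (σ h : ℝ) (Np : ℕ) (hσ : 0 < σ) (hNp : 0 < Np) (hh : h = π / Np)
    (U V θ δ : Ω → ℝ)
    (hU : Measurable U) (hV : Measurable V) (hθ : Measurable θ)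
    (hδ : Measurable δ)
    (hUnn : ∀ ω, 0 ≤ U ω)
    (hUint : Integrable (fun ω => (U ω) ^ 2))
    (hU2 : (∫ ω, (U ω) ^ 2) = 2)
    (hVfin : (Set.range V).Finite)
    (hcentroid : V =ᵐ[volume]
      (volume : Measure Ω)[U | MeasurableSpace.comap V inferInstance])
    (hθlaw : Measure.map θ (volume : Measure Ω) =
      (ENNReal.ofReal (2 * π))⁻¹ • volume.restrict (Set.Ioc (-π) π))
    (hθindep : IndepFun θ (fun ω => σ * U ω))
    (hδlaw : Measure.map δ (volume : Measure Ω) =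
      (ENNReal.ofReal (2 * h))⁻¹ • volume.restrict (Set.Icc (-h) h))
    (hδindep : IndepFun δ (fun ω => (U ω, V ω)))
    (C : ℝ) (hC : C = ∫ ω, (U ω - V ω) ^ 2) :
    (∫ ω, ‖(σ * U ω : ℂ) * Complex.exp (θ ω * Complex.I) -
        (σ * V ω : ℂ) * Complex.exp ((θ ω - δ ω) * Complex.I)‖ ^ 2) =
      σ ^ 2 * (C + 2 * (2 - C) * (1 - Real.sin h / h)) :=
  rayleigh_lloyd_polar_distortion_general σ h Np hNp hh U V θ δ hU hV hδ hUint hU2 hVfin hcentroid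
    hδlaw hδindep C hC
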